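/- Let N ≥ 1 be an integer, η₁,η₂,η₅,η₆, s ∈ ℝ with s ∈ {η₅, η₆} and N + s ∈ {η₁, η₂}. Let H₁, H₂ be the N×N Hahn matrices built from (η₁,η₂,η₅,η₆) and shift s, and H₃ = H₁H₂ − H₂H₁. Then, with A₂ = (1/2)(1−η₁²−η₂²−η₅²−η₆²) + (1/8)(η₁+η₂+η₅+η₆)² and A₃ = −(1/4)(η₁+η₂−η₅−η₆)((η₁−η₂)²−(η₅−η₆)²), the Hahn algebra relations hold: H₃H₂ − H₂H₃ = 2(H₁H₂ + H₂H₁) + A₃·Id and H₁H₃ − H₃H₁ = 2H₁² + H₂ + A₂·Id. -/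
import Mathlib


noncomputable section

open Matrix

/-- The diagonal Hahn matrix `H₁ = diag(0,−1,…,−(N−1)) + ((η₁+η₂+η₅+η₆−2)/4 − s)·Id`. -/
def H1mat (N : ℕ) (η1 η2 η5 η6 s : ℝ) : Matrix (Fin N) (Fin N) ℝ :=
  Matrix.of fun i j =>
    if i = j then -((i : ℕ) : ℝ) + ((η1 + η2 + η5 + η6 - 2) / 4 - s) else 0

/-- The tridiagonal Hahn matrix `H₂` with `α_{j,j+1} = −(j+s−η₁)(j+s−η₂)`,
`α_{j+1,j} = −(j+s−η₅)(j+s−η₆)` and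
`α_{j,j} = −(j−1+s−η₅)(j−1+s−η₆) − (j+s−η₁)(j+s−η₂) + (1/4)(η₁+η₂−η₅−η₆)(η₁+η₂−η₅−η₆−2)`. -/
def H2mat (N : ℕ) (η1 η2 η5 η6 s : ℝ) : Matrix (Fin N) (Fin N) ℝ :=
  Matrix.of fun i j =>
    if (j : ℕ) = (i : ℕ) + 1 then
      -(((i : ℕ) + 1 : ℝ) + s - η1) * (((i : ℕ) + 1 : ℝ) + s - η2)
    else if (i : ℕ) = (j : ℕ) + 1 then
      -(((j : ℕ) + 1 : ℝ) + s - η5) * (((j : ℕ) + 1 : ℝ) + s - η6)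
    else if i = j then
      -(((i : ℕ) : ℝ) + s - η5) * (((i : ℕ) : ℝ) + s - η6)
        - (((i : ℕ) + 1 : ℝ) + s - η1) * (((i : ℕ) + 1 : ℝ) + s - η2)
        + (1 / 4) * (η1 + η2 - η5 - η6) * (η1 + η2 - η5 - η6 - 2)
    else 0

namespace HahnAux

variable (η1 η2 η5 η6 s : ℝ)

def dd (x : ℝ) : ℝ := -x + ((η1 + η2 + η5 + η6 - 2) / 4 - s)

lemma H1_eq (N : ℕ) :
    H1mat N η1 η2 η5 η6 s
      = Matrix.diagonal (fun i : Fin N => dd η1 η2 η5 η6 s ((i : ℕ) : ℝ)) := by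
  ext i j
  simp only [H1mat, Matrix.of_apply, Matrix.diagonal_apply, dd]

lemma H2_super {N : ℕ} (i k : Fin N) (h : (k : ℕ) = (i : ℕ) + 1) :
    H2mat N η1 η2 η5 η6 s i k
      = -(((i : ℕ) : ℝ) + 1 + s - η1) * (((i : ℕ) : ℝ) + 1 + s - η2) := by
  simp only [H2mat, Matrix.of_apply, if_pos h]

lemma H2_sub {N : ℕ} (i k : Fin N) (h : (i : ℕ) = (k : ℕ) + 1) :
    H2mat N η1 η2 η5 η6 s i k
      = -(((k : ℕ) : ℝ) + 1 + s - η5) * (((k : ℕ) : ℝ) + 1 + s - η6) := by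
  simp only [H2mat, Matrix.of_apply]
  rw [if_neg (by omega), if_pos h]

lemma H2_diag {N : ℕ} (i : Fin N) :
    H2mat N η1 η2 η5 η6 s i i
      = -(((i : ℕ) : ℝ) + s - η5) * (((i : ℕ) : ℝ) + s - η6)
        - (((i : ℕ) : ℝ) + 1 + s - η1) * (((i : ℕ) : ℝ) + 1 + s - η2)
        + (1 / 4) * (η1 + η2 - η5 - η6) * (η1 + η2 - η5 - η6 - 2) := by
  simp only [H2mat, Matrix.of_apply]
  rw [if_neg (by omega), if_neg (by omega)]
  simp

lemma H2_zero {N : ℕ} (i k : Fin N) (h1 : (k : ℕ) ≠ (i : ℕ) + 1)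
    (h2 : (i : ℕ) ≠ (k : ℕ) + 1) (h3 : (i : ℕ) ≠ (k : ℕ)) :
    H2mat N η1 η2 η5 η6 s i k = 0 := by
  simp only [H2mat, Matrix.of_apply]
  rw [if_neg h1, if_neg h2, if_neg (fun h => h3 (by rw [h]))]


lemma rel1_entry {N : ℕ} (M : Matrix (Fin N) (Fin N) ℝ) (dv : Fin N → ℝ) (i j : Fin N) :
    (Matrix.diagonal dv * (M * M) - M * (Matrix.diagonal dv * M)
      - (M * (Matrix.diagonal dv * M) - M * M * Matrix.diagonal dv)) i j
    = ∑ k, (dv i + dv j - 2 * dv k) * (M i k * M k j) := by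
  simp only [Matrix.sub_apply, Matrix.mul_apply, Matrix.diagonal_apply, ite_mul, mul_ite,
    zero_mul, mul_zero, Finset.sum_ite_eq, Finset.sum_ite_eq', Finset.mem_univ, if_true]
  rw [Finset.mul_sum, Finset.sum_mul]
  simp only [← Finset.sum_sub_distrib]
  exact Finset.sum_congr rfl fun k _ => by ring

end HahnAux

open HahnAux

/-- under the boundary conditions `s ∈ {η₅, η₆}` and `N + s ∈ {η₁, η₂}`, the
Hahn matrices satisfy the Hahn algebra relations
`[H₃,H₂] = 2{H₁,H₂} + A₃·Id` and `[H₁,H₃] = 2H₁² + H₂ + A₂·Id`. -/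
theorem stmt5 (N : ℕ) (hN : 1 ≤ N) (η1 η2 η5 η6 s : ℝ)
    (hs : s = η5 ∨ s = η6) (hNs : (N : ℝ) + s = η1 ∨ (N : ℝ) + s = η2) :
    let H1 := H1mat N η1 η2 η5 η6 s
    let H2 := H2mat N η1 η2 η5 η6 s
    let H3 := H1 * H2 - H2 * H1
    let A2 : ℝ := (1 / 2) * (1 - η1 ^ 2 - η2 ^ 2 - η5 ^ 2 - η6 ^ 2)
      + (1 / 8) * (η1 + η2 + η5 + η6) ^ 2
    let A3 : ℝ := -(1 / 4) * (η1 + η2 - η5 - η6) * ((η1 - η2) ^ 2 - (η5 - η6) ^ 2)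
    H3 * H2 - H2 * H3 = (2 : ℝ) • (H1 * H2 + H2 * H1) + A3 • (1 : Matrix (Fin N) (Fin N) ℝ) ∧
    H1 * H3 - H3 * H1 = (2 : ℝ) • (H1 * H1) + H2 + A2 • (1 : Matrix (Fin N) (Fin N) ℝ) := by
  intro H1 H2 H3 A2 A3
  simp only [H3, H1, H2, A2, A3]
  simp only [H1_eq η1 η2 η5 η6 s N]
  set M := H2mat N η1 η2 η5 η6 s with hM
  set dv : Fin N → ℝ := fun i : Fin N => dd η1 η2 η5 η6 s ((i : ℕ) : ℝ) with hdv
  set D := Matrix.diagonal dv with hD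
  constructor
  · have expand : (D * M - M * D) * M - M * (D * M - M * D)
        = D * (M * M) - M * (D * M) - (M * (D * M) - M * M * D) := by noncomm_ring
    rw [expand, hD]
    ext i j
    rw [rel1_entry]
    simp only [Matrix.add_apply, Matrix.smul_apply, Matrix.diagonal_mul, Matrix.mul_diagonal,
      smul_eq_mul, Matrix.one_apply]
    by_cases hA : (j : ℕ) = (i : ℕ) + 1
    · have hne : i ≠ j := by intro h; subst h; omega
      have hside : ∀ c : Fin N, c ≠ i ∧ c ≠ j →
          (dv i + dv j - 2 * dv c) * (M i c * M c j) = 0 := by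
        rintro c ⟨hci, hcj⟩
        have hci' : (c : ℕ) ≠ (i : ℕ) := fun h => hci (Fin.ext h)
        have hcj' : (c : ℕ) ≠ (j : ℕ) := fun h => hcj (Fin.ext h)
        by_cases h2 : (i : ℕ) = (c : ℕ) + 1
        · rw [hM, H2_zero η1 η2 η5 η6 s c j (by omega) (by omega) (by omega)]; ring
        · rw [hM, H2_zero η1 η2 η5 η6 s i c (by omega) h2 (Ne.symm hci')]; ring
      rw [Fintype.sum_eq_add i j hne hside, if_neg hne, hM,
        H2_super η1 η2 η5 η6 s i j hA, H2_diag η1 η2 η5 η6 s i, H2_diag η1 η2 η5 η6 s j]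
      have hc : ((j : ℕ) : ℝ) = ((i : ℕ) : ℝ) + 1 := by exact_mod_cast hA
      simp only [hdv, dd]
      rw [hc]; ring
    · by_cases hB : (i : ℕ) = (j : ℕ) + 1
      · have hne : j ≠ i := by intro h; subst h; omega
        have hside : ∀ c : Fin N, c ≠ j ∧ c ≠ i →
            (dv i + dv j - 2 * dv c) * (M i c * M c j) = 0 := by
          rintro c ⟨hcj, hci⟩
          have hci' : (c : ℕ) ≠ (i : ℕ) := fun h => hci (Fin.ext h)
          have hcj' : (c : ℕ) ≠ (j : ℕ) := fun h => hcj (Fin.ext h)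
          by_cases h2 : (c : ℕ) = (i : ℕ) + 1
          · rw [hM, H2_zero η1 η2 η5 η6 s c j (by omega) (by omega) (by omega)]; ring
          · by_cases h3 : (i : ℕ) = (c : ℕ) + 1
            · exact absurd (by omega : (c : ℕ) = (j : ℕ)) hcj'
            · rw [hM, H2_zero η1 η2 η5 η6 s i c h2 h3 (Ne.symm hci')]; ring
        rw [Fintype.sum_eq_add j i hne hside, if_neg (Ne.symm hne), hM,
          H2_sub η1 η2 η5 η6 s i j hB, H2_diag η1 η2 η5 η6 s i, H2_diag η1 η2 η5 η6 s j]
        have hc : ((i : ℕ) : ℝ) = ((j : ℕ) : ℝ) + 1 := by exact_mod_cast hB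
        simp only [hdv, dd]
        rw [hc]; ring
      · by_cases hC : i = j
        · subst hC
          rw [if_pos rfl]
          by_cases h0 : (i : ℕ) = 0
          · by_cases hT : (i : ℕ) + 1 = N
            · -- N = 1 case
              rw [Finset.sum_eq_zero (fun k _ => by
                have hk := k.isLt
                have hki : k = i := Fin.ext (by omega)
                rw [hki, show dv i + dv i - 2 * dv i = 0 from by ring, zero_mul])]
              rw [hM, H2_diag η1 η2 η5 η6 s i]
              have hi0 : ((i : ℕ) : ℝ) = 0 := by exact_mod_cast h0
              have hN1 : ((N : ℕ) : ℝ) = 1 := by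
                have : N = 1 := by omega
                rw [this]; norm_num
              simp only [hdv, dd]
              rcases hs with h | h <;> rcases hNs with hn | hn <;>
                rw [← h, ← hn, hN1, hi0] <;> ring
            · -- i = 0 < N - 1
              have hlt : (i : ℕ) + 1 < N := by have := i.isLt; omega
              set b : Fin N := ⟨(i : ℕ) + 1, hlt⟩ with hb
              have hbv : (b : ℕ) = (i : ℕ) + 1 := rfl
              have hside : ∀ c : Fin N, c ≠ b →
                  (dv i + dv i - 2 * dv c) * (M i c * M c i) = 0 := by
                intro c hc
                have hc' : (c : ℕ) ≠ (i : ℕ) + 1 := fun h => hc (Fin.ext (by omega))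
                by_cases hci : (c : ℕ) = (i : ℕ)
                · have hce : c = i := Fin.ext hci
                  rw [hce, show dv i + dv i - 2 * dv i = 0 from by ring, zero_mul]
                · rw [hM, H2_zero η1 η2 η5 η6 s i c hc' (by omega) (Ne.symm hci)]; ring
              rw [Fintype.sum_eq_single b hside, hM,
                H2_super η1 η2 η5 η6 s i b hbv, H2_sub η1 η2 η5 η6 s b i hbv,
                H2_diag η1 η2 η5 η6 s i]
              have hcb : ((b : ℕ) : ℝ) = ((i : ℕ) : ℝ) + 1 := by exact_mod_cast hbv
              have hi0 : ((i : ℕ) : ℝ) = 0 := by exact_mod_cast h0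
              simp only [hdv, dd]
              rcases hs with h | h <;> rw [← h, hcb, hi0] <;> ring
          · by_cases hT : (i : ℕ) + 1 = N
            · -- i = N - 1 > 0
              have hlt : (i : ℕ) - 1 < N := by have := i.isLt; omega
              set a : Fin N := ⟨(i : ℕ) - 1, hlt⟩ with ha
              have hav : (i : ℕ) = (a : ℕ) + 1 := by
                have : (a : ℕ) = (i : ℕ) - 1 := rfl
                omega
              have hside : ∀ c : Fin N, c ≠ a →
                  (dv i + dv i - 2 * dv c) * (M i c * M c i) = 0 := by
                intro c hc
                have hc' : (c : ℕ) ≠ (i : ℕ) - 1 := fun h => hc (Fin.ext (by omega))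
                have hck := c.isLt
                by_cases hci : (c : ℕ) = (i : ℕ)
                · have hce : c = i := Fin.ext hci
                  rw [hce, show dv i + dv i - 2 * dv i = 0 from by ring, zero_mul]
                · rw [hM, H2_zero η1 η2 η5 η6 s i c (by omega) (by omega) (Ne.symm hci)]; ring
              rw [Fintype.sum_eq_single a hside, hM,
                H2_sub η1 η2 η5 η6 s i a hav, H2_super η1 η2 η5 η6 s a i hav,
                H2_diag η1 η2 η5 η6 s i]
              have hca : ((i : ℕ) : ℝ) = ((a : ℕ) : ℝ) + 1 := by exact_mod_cast hav
              have hNr : ((N : ℕ) : ℝ) = ((a : ℕ) : ℝ) + 2 := by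
                have h2 : N = (a : ℕ) + 2 := by omega
                exact_mod_cast congrArg (Nat.cast : ℕ → ℝ) h2
              simp only [hdv, dd]
              rcases hNs with hn | hn <;> rw [← hn, hNr, hca] <;> ring
            · -- interior
              have hlt1 : (i : ℕ) - 1 < N := by have := i.isLt; omega
              have hlt2 : (i : ℕ) + 1 < N := by have := i.isLt; omega
              set a : Fin N := ⟨(i : ℕ) - 1, hlt1⟩ with ha
              set b : Fin N := ⟨(i : ℕ) + 1, hlt2⟩ with hb
              have hav : (i : ℕ) = (a : ℕ) + 1 := by
                have : (a : ℕ) = (i : ℕ) - 1 := rfl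
                omega
              have hbv : (b : ℕ) = (i : ℕ) + 1 := rfl
              have hab : a ≠ b := by
                intro h
                have := congrArg Fin.val h
                simp only [ha, hb] at this
                omega
              have hside : ∀ c : Fin N, c ≠ a ∧ c ≠ b →
                  (dv i + dv i - 2 * dv c) * (M i c * M c i) = 0 := by
                rintro c ⟨hca, hcb⟩
                have hca' : (c : ℕ) ≠ (i : ℕ) - 1 := fun h => hca (Fin.ext (by omega))
                have hcb' : (c : ℕ) ≠ (i : ℕ) + 1 := fun h => hcb (Fin.ext (by omega))
                by_cases hci : (c : ℕ) = (i : ℕ)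
                · have hce : c = i := Fin.ext hci
                  rw [hce, show dv i + dv i - 2 * dv i = 0 from by ring, zero_mul]
                · rw [hM, H2_zero η1 η2 η5 η6 s i c hcb' (by omega) (Ne.symm hci)]; ring
              rw [Fintype.sum_eq_add a b hab hside, hM,
                H2_sub η1 η2 η5 η6 s i a hav, H2_super η1 η2 η5 η6 s a i hav,
                H2_super η1 η2 η5 η6 s i b hbv, H2_sub η1 η2 η5 η6 s b i hbv,
                H2_diag η1 η2 η5 η6 s i]
              have hca : ((i : ℕ) : ℝ) = ((a : ℕ) : ℝ) + 1 := by exact_mod_cast hav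
              have hcb : ((b : ℕ) : ℝ) = ((i : ℕ) : ℝ) + 1 := by exact_mod_cast hbv
              simp only [hdv, dd]
              rw [hcb, hca]; ring
        · -- |i - j| ≥ 2
          have hC' : (i : ℕ) ≠ (j : ℕ) := fun h => hC (Fin.ext h)
          rw [if_neg hC, hM, H2_zero η1 η2 η5 η6 s i j hA hB hC']
          rw [Finset.sum_eq_zero]
          · ring
          · intro k _
            by_cases hk1 : (k : ℕ) = (i : ℕ) + 1
            · by_cases hk2 : (j : ℕ) = (k : ℕ) + 1
              · have c1 : ((k : ℕ) : ℝ) = ((i : ℕ) : ℝ) + 1 := by exact_mod_cast hk1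
                have c2 : ((j : ℕ) : ℝ) = ((i : ℕ) : ℝ) + 2 := by
                  have : (j : ℕ) = (i : ℕ) + 2 := by omega
                  exact_mod_cast this
                have hco : dv i + dv j - 2 * dv k = 0 := by
                  simp only [hdv, dd]; rw [c1, c2]; ring
                rw [hco, zero_mul]
              · rw [H2_zero η1 η2 η5 η6 s k j hk2 (by omega) (by omega)]; ring
            · by_cases hk3 : (i : ℕ) = (k : ℕ) + 1
              · by_cases hk4 : (k : ℕ) = (j : ℕ) + 1
                · have c1 : ((k : ℕ) : ℝ) = ((j : ℕ) : ℝ) + 1 := by exact_mod_cast hk4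
                  have c2 : ((i : ℕ) : ℝ) = ((j : ℕ) : ℝ) + 2 := by
                    have : (i : ℕ) = (j : ℕ) + 2 := by omega
                    exact_mod_cast this
                  have hco : dv i + dv j - 2 * dv k = 0 := by
                    simp only [hdv, dd]; rw [c1, c2]; ring
                  rw [hco, zero_mul]
                · rw [H2_zero η1 η2 η5 η6 s k j (by omega) hk4 (by omega)]; ring
              · by_cases hk5 : (i : ℕ) = (k : ℕ)
                · rw [H2_zero η1 η2 η5 η6 s k j (by omega) (by omega) (by omega)]; ring
                · rw [H2_zero η1 η2 η5 η6 s i k hk1 hk3 hk5]; ring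

  · ext i j
    simp only [Matrix.mul_sub, Matrix.sub_mul, Matrix.sub_apply, Matrix.add_apply,
      Matrix.smul_apply, smul_eq_mul, Matrix.mul_diagonal, Matrix.diagonal_mul,
      Matrix.one_apply, hD, Matrix.diagonal_apply]
    by_cases hd : i = j
    · subst hd
      simp only [eq_self_iff_true, if_true, ite_true, hdv, hM, H2_diag, dd]
      ring
    · simp only [if_neg hd, hdv, dd, mul_zero, mul_one]
      have hd' : (i : ℕ) ≠ (j : ℕ) := fun h => hd (Fin.ext h)
      by_cases h1 : (j : ℕ) = (i : ℕ) + 1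
      · rw [hM, H2_super η1 η2 η5 η6 s i j h1]
        have hc : ((j : ℕ) : ℝ) = ((i : ℕ) : ℝ) + 1 := by exact_mod_cast h1
        rw [hc]; ring
      · by_cases h2 : (i : ℕ) = (j : ℕ) + 1
        · rw [hM, H2_sub η1 η2 η5 η6 s i j h2]
          have hc : ((i : ℕ) : ℝ) = ((j : ℕ) : ℝ) + 1 := by exact_mod_cast h2
          rw [hc]; ring
        · rw [hM, H2_zero η1 η2 η5 η6 s i j h1 h2 hd']
          ring

end
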